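/- arXiv:2210.06862 — 8 statements merged into one kernel-verified Lean document; each statement's English description precedes it below -/
import Mathlib

section
/- For every k ∈ ℤ/nℤ, the matrices B_k satisfy the braid relation B_k · B_{k+1} · B_k = B_{k+1} · B_k · B_{k+1} (matrix multiplication, indices taken modulo n). -/
/-- The matrix `ρ(σ_k)`: agrees with the identity outside rows/columns `k, k+1`,
with block `[[1-t, t],[1, 0]]` in rows/columns `k, k+1` (indices in `ZMod n`). -/
def Bmat (n : ℕ) (R : Type*) [CommRing R] (t : Rˣ) (k : ZMod n) :
    Matrix (ZMod n) (ZMod n) R := fun i j =>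
  if i = k ∧ j = k then 1 - (t : R)
  else if i = k ∧ j = k + 1 then (t : R)
  else if i = k + 1 ∧ j = k then 1
  else if i = k + 1 ∧ j = k + 1 then 0
  else if i = j then 1 else 0

/-- The matrix `ρ(τ_k)`: agrees with the identity outside rows/columns `k, k+1`,
with block `[[0, s],[s⁻¹, 0]]` in rows/columns `k, k+1` (indices in `ZMod n`). -/
def Tmat (n : ℕ) (R : Type*) [CommRing R] (s : Rˣ) (k : ZMod n) :
    Matrix (ZMod n) (ZMod n) R := fun i j =>
  if i = k ∧ j = k then 0
  else if i = k ∧ j = k + 1 then (s : R)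
  else if i = k + 1 ∧ j = k then ((s⁻¹ : Rˣ) : R)
  else if i = k + 1 ∧ j = k + 1 then 0
  else if i = j then 1 else 0

/-! Left multiplication by `burauMatrix t a b` is the row operation
`(row a, row b) ↦ ((1 - t) • row a + t • row b, row a)`. Applied to an arbitrary matrix, both sides
of the braid relation for distinct `a, b, c` send `(row a, row b, row c)` to
`((1 - t) • row a + t(1 - t) • row b + t² • row c, (1 - t) • row a + t • row b, row a)`. -/

theorem ZMod.natCast_ne_zero_of_pos_of_lt {n m : ℕ} (hm : 0 < m) (hmn : m < n) :
    (m : ZMod n) ≠ 0 := by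
  rw [Ne, ZMod.natCast_eq_zero_iff]
  exact Nat.not_dvd_of_pos_of_lt hm hmn

namespace Matrix

variable {ι R : Type*} [Fintype ι] [DecidableEq ι] [Ring R]

def burauMatrix (t : R) (a b : ι) : Matrix ι ι R := fun i j =>
  if i = a ∧ j = a then 1 - t
  else if i = a ∧ j = b then t
  else if i = b ∧ j = a then 1
  else if i = b ∧ j = b then 0
  else if i = j then 1 else 0

theorem burauMatrix_mul_apply (t : R) {a b : ι} (hab : a ≠ b) (M : Matrix ι ι R) (i j : ι) :
    (burauMatrix t a b * M) i j =
      if i = a then (1 - t) * M a j + t * M b j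
      else if i = b then M a j
      else M i j := by
  rw [mul_apply]
  split_ifs with ha hb
  · subst ha
    rw [Fintype.sum_eq_add i b hab fun x hx => by simp [burauMatrix, hx.1, hx.2, Ne.symm hx.1]]
    simp [burauMatrix, hab.symm]
  · subst hb
    rw [Fintype.sum_eq_single a fun x hx => by simp +contextual [burauMatrix, hx, hab.symm, eq_comm]]
    simp [burauMatrix, hab.symm]
  · rw [Fintype.sum_eq_single i fun x hx => by simp [burauMatrix, ha, hb, Ne.symm hx]]
    simp [burauMatrix, ha, hb]

theorem burauMatrix_braid (t : R) {a b c : ι} (hab : a ≠ b) (hbc : b ≠ c) (hac : a ≠ c) :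
    burauMatrix t a b * burauMatrix t b c * burauMatrix t a b =
      burauMatrix t b c * burauMatrix t a b * burauMatrix t b c := by
  suffices h : ∀ M : Matrix ι ι R,
      burauMatrix t a b * (burauMatrix t b c * (burauMatrix t a b * M)) =
        burauMatrix t b c * (burauMatrix t a b * (burauMatrix t b c * M)) by
    simpa only [mul_assoc, mul_one] using h 1
  intro M
  ext i j
  simp only [burauMatrix_mul_apply t hab, burauMatrix_mul_apply t hbc, hab, hbc, hac, hab.symm,
    hbc.symm, hac.symm, if_true, if_false]
  split_ifs <;> subst_vars <;> first | contradiction | noncomm_ring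

end Matrix

theorem stmt_0 (n : ℕ) [NeZero n] (hn : 3 ≤ n) (R : Type*) [CommRing R] (t : Rˣ)
    (k : ZMod n) :
    Bmat n R t k * Bmat n R t (k + 1) * Bmat n R t k =
      Bmat n R t (k + 1) * Bmat n R t k * Bmat n R t (k + 1) := by
  have h1 : (1 : ZMod n) ≠ 0 := by
    exact_mod_cast ZMod.natCast_ne_zero_of_pos_of_lt one_pos (by omega : 1 < n)
  have h2 : (2 : ZMod n) ≠ 0 := by
    exact_mod_cast ZMod.natCast_ne_zero_of_pos_of_lt two_pos (by omega : 2 < n)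
  have hk₁ : k ≠ k + 1 := left_ne_add.mpr h1
  have hk₂ : k + 1 ≠ k + 1 + 1 := left_ne_add.mpr h1
  have hk₀₂ : k ≠ k + 1 + 1 := by rw [add_assoc, one_add_one_eq_two]; exact left_ne_add.mpr h2
  -- `Bmat n R t k` unfolds to `burauMatrix (t : R) k (k + 1)`.
  exact Matrix.burauMatrix_braid (t : R) hk₁ hk₂ hk₀₂
end

section
/- For every k ∈ ℤ/nℤ, the matrices T_k satisfy the braid relation T_k · T_{k+1} · T_k = T_{k+1} · T_k · T_{k+1} (indices taken modulo n). -/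
/-!
Each `T_k` is a monomial matrix: conjugating the permutation matrix of the transposition
`(k k+1)` by a diagonal matrix `D` with `D_k = s D_{k+1}` gives `T_k`. Since `n ≥ 3`, the indices
`k, k+1, k+2` are distinct, so a single `D = diag(s², s, 1)` (on these indices) works for `T_k` and
`T_{k+1}` simultaneously, and the braid relation follows from the one for transpositions.
-/

open Matrix

theorem ZMod.add_natCast_ne_self {n m : ℕ} (k : ZMod n) (hm₀ : 0 < m) (hmn : m < n) :
    k + m ≠ k := by
  rw [Ne, add_eq_left, ZMod.natCast_eq_zero_iff]
  exact Nat.not_dvd_of_pos_of_lt hm₀ hmn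

theorem Matrix.permMatrix_swap_braid {α : Type*} [DecidableEq α] [Fintype α] (R : Type*)
    [Semiring R] {x y z : α} (hxy : x ≠ y) (hxz : x ≠ z) (hyz : y ≠ z) :
    (Equiv.swap x y).permMatrix R * (Equiv.swap y z).permMatrix R *
        (Equiv.swap x y).permMatrix R =
      (Equiv.swap y z).permMatrix R * (Equiv.swap x y).permMatrix R *
        (Equiv.swap y z).permMatrix R := by
  have hzx := Equiv.swap_mul_swap_mul_swap hxy hxz
  have hxz' := Equiv.swap_mul_swap_mul_swap hyz.symm hxz.symm
  rw [Equiv.swap_comm y x, Equiv.swap_comm z y] at hxz'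
  simp only [← permMatrix_mul, ← mul_assoc, hzx, hxz', Equiv.swap_comm]

theorem Tmat_mul_diagonal {n : ℕ} [NeZero n] {R : Type*} [CommRing R] (s : Rˣ) {k : ZMod n}
    (hk : k + 1 ≠ k) (d : ZMod n → R) (hd : s * d (k + 1) = d k) :
    Tmat n R s k * diagonal d = diagonal d * (Equiv.swap k (k + 1)).permMatrix R := by
  have hd' : (s⁻¹ : Rˣ) * d k = d (k + 1) := by rw [← hd, Units.inv_mul_cancel_left]
  ext i j
  simp only [mul_diagonal, diagonal_mul, Tmat, PEquiv.toMatrix_apply, Equiv.toPEquiv_apply,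
    Option.mem_def, Option.some.injEq]
  rcases eq_or_ne i k with rfl | hik
  · rcases eq_or_ne j i with rfl | hji
    · simp [hk]
    rcases eq_or_ne j (i + 1) with rfl | hj
    · simp [hk, hd]
    · simp [hji, hj, hji.symm, hj.symm]
  rcases eq_or_ne i (k + 1) with rfl | hik'
  · rcases eq_or_ne j k with rfl | hj
    · simp [hk, hd']
    rcases eq_or_ne j (k + 1) with rfl | hj'
    · simp [hk, hk.symm]
    · simp [hj, hj', hj.symm, hj'.symm]
  · rw [Equiv.swap_apply_of_ne_of_ne hik hik']
    rcases eq_or_ne i j with rfl | hij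
    · simp [hik, hik']
    · simp [hik, hik', hij]

theorem stmt_3 (n : ℕ) [NeZero n] (hn : 3 ≤ n) (R : Type*) [CommRing R] (s : Rˣ)
    (k : ZMod n) :
    Tmat n R s k * Tmat n R s (k + 1) * Tmat n R s k =
      Tmat n R s (k + 1) * Tmat n R s k * Tmat n R s (k + 1) := by
  have h₁ (i : ZMod n) : i + 1 ≠ i := by exact_mod_cast i.add_natCast_ne_self one_pos (by omega)
  have h₂ : k + 1 + 1 ≠ k := by
    rw [add_assoc, one_add_one_eq_two]
    exact_mod_cast k.add_natCast_ne_self two_pos (by omega)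
  let d (i : ZMod n) : R := ((if i = k then s ^ 2 else if i = k + 1 then s else 1 : Rˣ) : R)
  have hD : IsUnit (diagonal d) := isUnit_diagonal.2 (Pi.isUnit_iff.2 fun _ ↦ Units.isUnit _)
  have hk : SemiconjBy (diagonal d) _ _ :=
    (Tmat_mul_diagonal s (h₁ k) d (by simp [d, h₁ k, sq])).symm
  have hk₁ : SemiconjBy (diagonal d) _ _ :=
    (Tmat_mul_diagonal s (h₁ (k + 1)) d (by simp [d, h₁, h₂])).symm
  refine hD.mul_left_inj.1 ?_
  rw [← ((hk.mul_right hk₁).mul_right hk).eq, ← ((hk₁.mul_right hk).mul_right hk₁).eq,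
    permMatrix_swap_braid R (h₁ k).symm h₂.symm (h₁ (k + 1)).symm]
end

section
/- For every k ∈ ℤ/nℤ, the mixed (detour) relation T_k · T_{k+1} · B_k · T_{k+1} · T_k = B_{k+1} holds (indices taken modulo n). -/
namespace Matrix

variable {ι m l R : Type*} [Fintype m] [DecidableEq m] [DecidableEq ι] [Ring R]

/-- `1 + P (A - 1) Pᵀ` with `P` the incidence matrix of `e`: for injective `e`, the matrix acting
as `A` on the coordinates in `Set.range e` and as the identity elsewhere. -/
def embedBlock (e : m → ι) (A : Matrix m m R) : Matrix ι ι R :=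
  1 + (1 : Matrix ι ι R).submatrix id e * (A - 1) * (1 : Matrix ι ι R).submatrix e id

omit [Fintype m] in
theorem one_submatrix_mul_one_submatrix [Fintype ι] {e : m → ι} (he : Function.Injective e) :
    (1 : Matrix ι ι R).submatrix e id * (1 : Matrix ι ι R).submatrix id e = 1 := by
  ext a b
  simp [mul_apply, one_apply, he.eq_iff]

theorem embedBlock_mul [Fintype ι] {e : m → ι} (he : Function.Injective e)
    (A B : Matrix m m R) :
    embedBlock e A * embedBlock e B = embedBlock e (A * B) := by
  have hQP := one_submatrix_mul_one_submatrix (R := R) he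
  simp only [embedBlock]
  generalize (1 : Matrix ι ι R).submatrix id e = P at hQP ⊢
  generalize (1 : Matrix ι ι R).submatrix e id = Q at hQP ⊢
  calc (1 + P * (A - 1) * Q) * (1 + P * (B - 1) * Q)
      = 1 + P * ((A - 1) + (B - 1) + (A - 1) * (Q * P) * (B - 1)) * Q := by
        simp only [Matrix.add_mul, Matrix.mul_add, Matrix.one_mul, Matrix.mul_one,
          Matrix.mul_assoc, add_assoc]
    _ = 1 + P * (A * B - 1) * Q := by rw [hQP, Matrix.mul_one]; congr 2; noncomm_ring

theorem embedBlock_comp [Fintype l] [DecidableEq l] (e : m → ι) (f : l → m)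
    (A : Matrix l l R) : embedBlock (e ∘ f) A = embedBlock e (embedBlock f A) := by
  have hP : (1 : Matrix ι ι R).submatrix id (e ∘ f) =
      (1 : Matrix ι ι R).submatrix id e * (1 : Matrix m m R).submatrix id f := by
    ext i a; simp [mul_apply, one_apply]
  have hQ : (1 : Matrix ι ι R).submatrix (e ∘ f) id =
      (1 : Matrix m m R).submatrix f id * (1 : Matrix ι ι R).submatrix e id := by
    ext a i
    rw [mul_apply, Finset.sum_eq_single (f a) (fun b _ hb => by simp [Ne.symm hb]) (by simp)]
    simp [one_apply]
  simp only [embedBlock, hP, hQ, add_sub_cancel_left, Matrix.mul_assoc]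

theorem embedBlock_apply_apply {e : m → ι} (he : Function.Injective e)
    (A : Matrix m m R) (a b : m) : embedBlock e A (e a) (e b) = A a b := by
  simp [embedBlock, mul_apply, one_apply, he.eq_iff]

theorem embedBlock_apply_of_notMem_left (e : m → ι) (A : Matrix m m R) {i : ι}
    (hi : i ∉ Set.range e) (j : ι) : embedBlock e A i j = (1 : Matrix ι ι R) i j := by
  have : ∀ a, i ≠ e a := fun a h => hi ⟨a, h.symm⟩
  simp [embedBlock, mul_apply, this]

theorem embedBlock_apply_of_notMem_right (e : m → ι) (A : Matrix m m R) (i : ι)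
    {j : ι} (hj : j ∉ Set.range e) : embedBlock e A i j = (1 : Matrix ι ι R) i j := by
  have : ∀ a, e a ≠ j := fun a h => hj ⟨a, h⟩
  simp [embedBlock, mul_apply, this]

theorem eq_embedBlock_of {e : m → ι} (he : Function.Injective e)
    {M : Matrix ι ι R} {A : Matrix m m R} (h_range : ∀ a b, M (e a) (e b) = A a b)
    (h_off : ∀ i j, i ∉ Set.range e ∨ j ∉ Set.range e →
      M i j = (1 : Matrix ι ι R) i j) :
    M = embedBlock e A := by
  ext i j
  by_cases hi : i ∈ Set.range e
  · by_cases hj : j ∈ Set.range e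
    · obtain ⟨a, rfl⟩ := hi
      obtain ⟨b, rfl⟩ := hj
      rw [embedBlock_apply_apply he, h_range]
    · rw [embedBlock_apply_of_notMem_right e A i hj, h_off i j (Or.inr hj)]
  · rw [embedBlock_apply_of_notMem_left e A hi j, h_off i j (Or.inl hi)]

theorem embedBlock_fin_two {p q : ι} (hpq : p ≠ q) (a b c d : R) :
    embedBlock ![p, q] !![a, b; c, d] = fun i j =>
      if i = p ∧ j = p then a else if i = p ∧ j = q then b
      else if i = q ∧ j = p then c else if i = q ∧ j = q then d
      else if i = j then 1 else 0 := by
  refine (eq_embedBlock_of ?_ ?_ ?_).symm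
  · intro x y; fin_cases x <;> fin_cases y <;> simp [hpq, hpq.symm]
  · intro x y; fin_cases x <;> fin_cases y <;> simp [hpq, hpq.symm]
  · intro i j h
    simp only [Set.mem_range, Fin.exists_fin_two, cons_val_zero, cons_val_one, not_or] at h
    rcases h with ⟨hp, hq⟩ | ⟨hp, hq⟩ <;> simp [one_apply, Ne.symm hp, Ne.symm hq]

theorem embedBlock_fin_three_zero_one (a b c d : R) :
    embedBlock ![(0 : Fin 3), 1] !![a, b; c, d] = !![a, b, 0; c, d, 0; 0, 0, 1] := by
  rw [embedBlock_fin_two (by decide)]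
  ext i j; fin_cases i <;> fin_cases j <;> rfl

theorem embedBlock_fin_three_one_two (a b c d : R) :
    embedBlock ![(1 : Fin 3), 2] !![a, b; c, d] = !![1, 0, 0; 0, a, b; 0, c, d] := by
  rw [embedBlock_fin_two (by decide)]
  ext i j; fin_cases i <;> fin_cases j <;> rfl

end Matrix

open Matrix

section
variable {n : ℕ} {R : Type*} [CommRing R] {k : ZMod n}

theorem Bmat_eq_embedBlock (hk : k ≠ k + 1) (t : Rˣ) :
    Bmat n R t k = embedBlock ![k, k + 1] !![1 - (t : R), t; 1, 0] :=
  (embedBlock_fin_two hk _ _ _ _).symm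

theorem Tmat_eq_embedBlock (hk : k ≠ k + 1) (s : Rˣ) :
    Tmat n R s k = embedBlock ![k, k + 1] !![0, (s : R); ((s⁻¹ : Rˣ) : R), 0] :=
  (embedBlock_fin_two hk _ _ _ _).symm

end

theorem ZMod.natCast_injOn_Iio (n : ℕ) : Set.InjOn (Nat.cast : ℕ → ZMod n) (Set.Iio n) := by
  intro a ha b hb h
  rwa [ZMod.natCast_eq_natCast_iff', Nat.mod_eq_of_lt ha, Nat.mod_eq_of_lt hb] at h

theorem stmt_4 (n : ℕ) [NeZero n] (hn : 3 ≤ n) (R : Type*) [CommRing R] (t s : Rˣ)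
    (k : ZMod n) :
    Tmat n R s k * Tmat n R s (k + 1) * Bmat n R t k * Tmat n R s (k + 1) * Tmat n R s k =
      Bmat n R t (k + 1) := by
  set e : Fin 3 → ZMod n := fun a => k + (a : ℕ)
  have he : Function.Injective e := fun a b h => Fin.ext <|
    ZMod.natCast_injOn_Iio n (a.isLt.trans_le hn) (b.isLt.trans_le hn) (add_left_cancel h)
  have h01 : ![k, k + 1] = e ∘ ![0, 1] := by ext a; fin_cases a <;> simp [e]
  have h12 : ![k + 1, k + 1 + 1] = e ∘ ![1, 2] := by
    ext a; fin_cases a <;> simp [e, add_assoc, one_add_one_eq_two]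
  have hk0 : k ≠ k + 1 := by simpa [e] using he.ne (by decide : (0 : Fin 3) ≠ 1)
  have hk1 : k + 1 ≠ k + 1 + 1 := by
    simpa [e, add_assoc, one_add_one_eq_two] using he.ne (by decide : (1 : Fin 3) ≠ 2)
  rw [Bmat_eq_embedBlock hk0, Bmat_eq_embedBlock hk1, Tmat_eq_embedBlock hk0,
    Tmat_eq_embedBlock hk1, h01, h12]
  simp only [embedBlock_comp, embedBlock_mul he, embedBlock_fin_three_zero_one,
    embedBlock_fin_three_one_two]
  congr 1
  simp [mul_right_comm _ _ (s : R)]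
end

section
/- (Proposition 3.) There exists a group homomorphism ρ from the presented group VCB_n to the group of invertible n×n matrices over R sending, for each k ∈ ℤ/nℤ, the generator σ_k to B_k and the generator τ_k to T_k. -/
/-- The generators `σ_k`, `τ_k` (`k ∈ ZMod n`) of the virtual cylinder braid group. -/
inductive VCBGen (n : ℕ) : Type
  | sigma : ZMod n → VCBGen n
  | tau : ZMod n → VCBGen n

/-- The relations of the virtual cylinder braid group `VCB_n` (all indices modulo `n`):
braid relations for the `σ`'s and for the `τ`'s, `τ_k² = 1`, the detour relation
`τ_k τ_{k+1} σ_k τ_{k+1} τ_k = σ_{k+1}`, and far commutativity `x_i y_j = y_j x_i`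
for `x, y ∈ {σ, τ}` whenever `{i, i+1}` and `{j, j+1}` are disjoint in `ZMod n`. -/
def VCBRels (n : ℕ) : Set (FreeGroup (VCBGen n)) :=
  let σ : ZMod n → FreeGroup (VCBGen n) := fun k => FreeGroup.of (VCBGen.sigma k)
  let τ : ZMod n → FreeGroup (VCBGen n) := fun k => FreeGroup.of (VCBGen.tau k)
  { w | (∃ k, w = σ k * σ (k + 1) * σ k * (σ (k + 1) * σ k * σ (k + 1))⁻¹) ∨
        (∃ k, w = τ k * τ (k + 1) * τ k * (τ (k + 1) * τ k * τ (k + 1))⁻¹) ∨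
        (∃ k, w = τ k * τ k) ∨
        (∃ k, w = τ k * τ (k + 1) * σ k * τ (k + 1) * τ k * (σ (k + 1))⁻¹) ∨
        (∃ i j, Disjoint ({i, i + 1} : Set (ZMod n)) {j, j + 1} ∧
          ∃ x y : ZMod n → FreeGroup (VCBGen n),
            (x = σ ∨ x = τ) ∧ (y = σ ∨ y = τ) ∧
            w = x i * y j * (x i)⁻¹ * (y j)⁻¹) }

/-!
Each generator goes to a matrix that differs from the identity only in a `2 × 2` block on two
consecutive indices, so left multiplication by it is a row operation on two rows. A defining
relation therefore only involves the rows and columns with indices among at most four values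
(three consecutive ones for the braid and detour relations, two disjoint pairs for far
commutativity), which are pairwise distinct once `3 ≤ n`, and it is checked entry by entry.
-/

namespace Matrix

variable {ι R : Type*} [Fintype ι] [DecidableEq ι] [CommRing R]

def blockAt (a b c d : R) (p q : ι) : Matrix ι ι R := fun i j =>
  if i = p ∧ j = p then a
  else if i = p ∧ j = q then b
  else if i = q ∧ j = p then c
  else if i = q ∧ j = q then d
  else if i = j then 1 else 0

variable {a b c d : R} {p q r : ι}

theorem blockAt_mul_apply (hpq : p ≠ q) (N : Matrix ι ι R) (i j : ι) :
    (blockAt a b c d p q * N) i j =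
      if i = p then a * N p j + b * N q j
      else if i = q then c * N p j + d * N q j
      else N i j := by
  rw [mul_apply]
  split_ifs with hp hq
  · rw [Fintype.sum_eq_add p q hpq fun l hl => by simp [blockAt, hp, hl.1, hl.2, hl.1.symm]]
    simp [blockAt, hp, hpq.symm]
  · rw [Fintype.sum_eq_add p q hpq fun l hl => by simp [blockAt, hq, hl.1, hl.2, hl.2.symm]]
    simp [blockAt, hq, hpq, hpq.symm]
  · simp [blockAt, hp, hq]

/-- `blockAt_mul_apply` for `N = 1`: in this form, the entries of a product of `blockAt`s
reduce to entries of `1`. -/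
theorem blockAt_apply (hpq : p ≠ q) (i j : ι) :
    blockAt a b c d p q i j =
      if i = p then a * (1 : Matrix ι ι R) p j + b * (1 : Matrix ι ι R) q j
      else if i = q then c * (1 : Matrix ι ι R) p j + d * (1 : Matrix ι ι R) q j
      else (1 : Matrix ι ι R) i j := by
  simpa using blockAt_mul_apply (a := a) (b := b) (c := c) (d := d) hpq 1 i j

theorem blockAt_mul_blockAt (hpq : p ≠ q) (a' b' c' d' : R) :
    blockAt a b c d p q * blockAt a' b' c' d' p q =
      blockAt (a * a' + b * c') (a * b' + b * d') (c * a' + d * c') (c * b' + d * d') p q := by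
  -- here and below, `simp [*]` needs each disequality in both orientations
  have := Ne.symm hpq
  have cases : ∀ i, i = p ∨ i = q ∨ (i ≠ p ∧ i ≠ q) := by tauto
  ext i j
  simp only [blockAt_mul_apply hpq, blockAt_apply hpq]
  rcases cases i with rfl | rfl | hi <;> rcases cases j with rfl | rfl | hj <;>
    simp [one_apply_eq, one_apply_ne, one_apply_ne', *]

theorem blockAt_one_zero_zero_one (hpq : p ≠ q) : blockAt (1 : R) 0 0 1 p q = 1 := by
  ext i j
  rw [blockAt_apply hpq]
  split_ifs with hp hq
  · subst hp; simp
  · subst hq; simp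
  · rfl

theorem blockAt_braid_burau (hpq : p ≠ q) (hqr : q ≠ r) (hpr : p ≠ r) (x : R) :
    blockAt (1 - x) x 1 0 p q * blockAt (1 - x) x 1 0 q r * blockAt (1 - x) x 1 0 p q =
      blockAt (1 - x) x 1 0 q r * blockAt (1 - x) x 1 0 p q * blockAt (1 - x) x 1 0 q r := by
  have := Ne.symm hpq; have := Ne.symm hqr; have := Ne.symm hpr
  have cases : ∀ i, i = p ∨ i = q ∨ i = r ∨ (i ≠ p ∧ i ≠ q ∧ i ≠ r) := by tauto
  ext i j
  simp only [mul_assoc, blockAt_mul_apply hpq, blockAt_mul_apply hqr, blockAt_apply hpq,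
    blockAt_apply hqr]
  rcases cases i with rfl | rfl | rfl | hi <;> rcases cases j with rfl | rfl | rfl | hj <;>
    simp [one_apply_eq, one_apply_ne, one_apply_ne', *] <;> ring

theorem blockAt_braid_antidiagonal (hpq : p ≠ q) (hqr : q ≠ r) (hpr : p ≠ r) (x y : R) :
    blockAt 0 x y 0 p q * blockAt 0 x y 0 q r * blockAt 0 x y 0 p q =
      blockAt 0 x y 0 q r * blockAt 0 x y 0 p q * blockAt 0 x y 0 q r := by
  have := Ne.symm hpq; have := Ne.symm hqr; have := Ne.symm hpr
  have cases : ∀ i, i = p ∨ i = q ∨ i = r ∨ (i ≠ p ∧ i ≠ q ∧ i ≠ r) := by tauto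
  ext i j
  simp only [mul_assoc, blockAt_mul_apply hpq, blockAt_mul_apply hqr, blockAt_apply hpq,
    blockAt_apply hqr]
  rcases cases i with rfl | rfl | rfl | hi <;> rcases cases j with rfl | rfl | rfl | hj <;>
    simp [one_apply_eq, one_apply_ne, one_apply_ne', mul_comm x y, *]

theorem blockAt_detour (hpq : p ≠ q) (hqr : q ≠ r) (hpr : p ≠ r) (x : R) (u : Rˣ) :
    blockAt 0 (u : R) ↑u⁻¹ 0 p q * blockAt 0 (u : R) ↑u⁻¹ 0 q r * blockAt (1 - x) x 1 0 p q *
        blockAt 0 (u : R) ↑u⁻¹ 0 q r * blockAt 0 (u : R) ↑u⁻¹ 0 p q =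
      blockAt (1 - x) x 1 0 q r := by
  have := Ne.symm hpq; have := Ne.symm hqr; have := Ne.symm hpr
  have cases : ∀ i, i = p ∨ i = q ∨ i = r ∨ (i ≠ p ∧ i ≠ q ∧ i ≠ r) := by tauto
  ext i j
  simp only [mul_assoc, blockAt_mul_apply hpq, blockAt_mul_apply hqr, blockAt_apply hpq,
    blockAt_apply hqr]
  rcases cases i with rfl | rfl | rfl | hi <;> rcases cases j with rfl | rfl | rfl | hj <;>
    simp [one_apply_eq, one_apply_ne, one_apply_ne', mul_left_comm (↑u⁻¹ : R), *]

theorem blockAt_commute {p' q' : ι} (hpq : p ≠ q) (hpq' : p' ≠ q')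
    (hd : Disjoint ({p, q} : Set ι) {p', q'}) (a' b' c' d' : R) :
    Commute (blockAt a b c d p q) (blockAt a' b' c' d' p' q') := by
  simp only [Set.disjoint_insert_left, Set.disjoint_singleton_left, Set.mem_insert_iff,
    Set.mem_singleton_iff, not_or] at hd
  obtain ⟨⟨h1, h2⟩, h3, h4⟩ := hd
  have := Ne.symm hpq; have := Ne.symm hpq'; have := Ne.symm h1; have := Ne.symm h2
  have := Ne.symm h3; have := Ne.symm h4
  have cases : ∀ i, i = p ∨ i = q ∨ i = p' ∨ i = q' ∨ (i ≠ p ∧ i ≠ q ∧ i ≠ p' ∧ i ≠ q') := by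
    tauto
  rw [commute_iff_eq]
  ext i j
  simp only [blockAt_mul_apply hpq, blockAt_mul_apply hpq', blockAt_apply hpq, blockAt_apply hpq']
  rcases cases i with rfl | rfl | rfl | rfl | hi <;>
    rcases cases j with rfl | rfl | rfl | rfl | hj <;>
    simp [one_apply_eq, one_apply_ne, one_apply_ne', *]

end Matrix

theorem ZMod.add_natCast_ne_self_s8 {n a : ℕ} (ha : 0 < a) (han : a < n) (k : ZMod n) :
    k + a ≠ k := by
  rw [Ne, add_eq_left, ZMod.natCast_eq_zero_iff]
  exact fun h => (Nat.le_of_dvd ha h).not_gt han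

theorem ZMod.self_ne_add_one {n : ℕ} (hn : 2 ≤ n) (k : ZMod n) : k ≠ k + 1 := by
  simpa using (k.add_natCast_ne_self_s8 one_pos hn).symm

theorem ZMod.self_ne_add_one_add_one {n : ℕ} (hn : 2 < n) (k : ZMod n) : k ≠ k + 1 + 1 := by
  simpa [add_assoc, one_add_one_eq_two] using (k.add_natCast_ne_self_s8 two_pos hn).symm

open Matrix

theorem Bmat_eq_blockAt (n : ℕ) (R : Type*) [CommRing R] (t : Rˣ) (k : ZMod n) :
    Bmat n R t k = blockAt (1 - (t : R)) t 1 0 k (k + 1) :=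
  rfl

theorem Tmat_eq_blockAt (n : ℕ) (R : Type*) [CommRing R] (s : Rˣ) (k : ZMod n) :
    Tmat n R s k = blockAt 0 (s : R) ↑s⁻¹ 0 k (k + 1) :=
  rfl

namespace VCBGen

variable {n : ℕ} {R : Type*} [CommRing R] (t s : Rˣ)

def index : VCBGen n → ZMod n
  | sigma k => k
  | tau k => k

def toMatrix : VCBGen n → Matrix (ZMod n) (ZMod n) R
  | sigma k => Bmat n R t k
  | tau k => Tmat n R s k

def toMatrixInv : VCBGen n → Matrix (ZMod n) (ZMod n) R
  | sigma k => blockAt 0 1 ↑t⁻¹ (1 - ↑t⁻¹) k (k + 1)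
  | tau k => Tmat n R s k

theorem toMatrix_eq_blockAt (g : VCBGen n) :
    ∃ a b c d : R, g.toMatrix t s = blockAt a b c d g.index (g.index + 1) := by
  cases g
  · exact ⟨_, _, _, _, rfl⟩
  · exact ⟨_, _, _, _, rfl⟩

variable [NeZero n]

theorem toMatrix_mul_toMatrixInv (hn : 2 ≤ n) (g : VCBGen n) :
    g.toMatrix t s * g.toMatrixInv t s = 1 := by
  cases g with
  | sigma k =>
    rw [toMatrix, toMatrixInv, Bmat_eq_blockAt, blockAt_mul_blockAt (k.self_ne_add_one hn),
      ← blockAt_one_zero_zero_one (k.self_ne_add_one hn)]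
    congr 1 <;> simp [mul_sub]
  | tau k =>
    rw [toMatrix, toMatrixInv, Tmat_eq_blockAt, blockAt_mul_blockAt (k.self_ne_add_one hn),
      ← blockAt_one_zero_zero_one (k.self_ne_add_one hn)]
    congr 1 <;> simp

def toUnit (hn : 2 ≤ n) (g : VCBGen n) : (Matrix (ZMod n) (ZMod n) R)ˣ :=
  ⟨g.toMatrix t s, g.toMatrixInv t s, toMatrix_mul_toMatrixInv t s hn g,
    mul_eq_one_comm.mp (toMatrix_mul_toMatrixInv t s hn g)⟩

@[simp]
theorem val_toUnit (hn : 2 ≤ n) (g : VCBGen n) :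
    (g.toUnit t s hn : Matrix (ZMod n) (ZMod n) R) = g.toMatrix t s :=
  rfl

theorem commute_toUnit (hn : 2 ≤ n) {g h : VCBGen n}
    (hd : Disjoint ({g.index, g.index + 1} : Set (ZMod n)) {h.index, h.index + 1}) :
    Commute (g.toUnit t s hn) (h.toUnit t s hn) := by
  obtain ⟨a, b, c, d, hg⟩ := g.toMatrix_eq_blockAt t s
  obtain ⟨a', b', c', d', hh⟩ := h.toMatrix_eq_blockAt t s
  rw [← Commute.units_val_iff, val_toUnit, val_toUnit, hg, hh]
  exact blockAt_commute (g.index.self_ne_add_one hn) (h.index.self_ne_add_one hn) hd _ _ _ _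

theorem lift_toUnit_eq_one (hn : 2 < n) {w : FreeGroup (VCBGen n)} (hw : w ∈ VCBRels n) :
    FreeGroup.lift (toUnit t s hn.le) w = 1 := by
  have h01 := ZMod.self_ne_add_one hn.le
  have h02 := ZMod.self_ne_add_one_add_one hn
  rcases hw with ⟨k, rfl⟩ | ⟨k, rfl⟩ | ⟨k, rfl⟩ | ⟨k, rfl⟩ |
    ⟨i, j, hd, _, _, rfl | rfl, rfl | rfl, rfl⟩
  all_goals simp only [map_mul, map_inv, FreeGroup.lift_apply_of]
  · rw [mul_inv_eq_one, Units.ext_iff]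
    exact blockAt_braid_burau (h01 k) (h01 (k + 1)) (h02 k) _
  · rw [mul_inv_eq_one, Units.ext_iff]
    exact blockAt_braid_antidiagonal (h01 k) (h01 (k + 1)) (h02 k) _ _
  · rw [Units.ext_iff]
    exact toMatrix_mul_toMatrixInv t s hn.le (tau k)
  · rw [mul_inv_eq_one, Units.ext_iff]
    exact blockAt_detour (h01 k) (h01 (k + 1)) (h02 k) _ _
  all_goals
    rw [← commutatorElement_def, commutatorElement_eq_one_iff_commute]
    exact commute_toUnit t s hn.le hd

end VCBGen

theorem stmt_8 (n : ℕ) [NeZero n] (hn : 3 ≤ n) (R : Type*) [CommRing R] (t s : Rˣ) :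
    ∃ ρ : PresentedGroup (VCBRels n) →* (Matrix (ZMod n) (ZMod n) R)ˣ,
      ∀ k : ZMod n,
        ((ρ (PresentedGroup.of (VCBGen.sigma k)) : Matrix (ZMod n) (ZMod n) R)
            = Bmat n R t k) ∧
        ((ρ (PresentedGroup.of (VCBGen.tau k)) : Matrix (ZMod n) (ZMod n) R)
            = Tmat n R s k) :=
  ⟨PresentedGroup.toGroup fun _ => VCBGen.lift_toUnit_eq_one t s hn, fun _ =>
    ⟨congrArg Units.val (PresentedGroup.toGroup.of _),
      congrArg Units.val (PresentedGroup.toGroup.of _)⟩⟩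
end

section
/- Let C be the n×n permutation matrix over R, rows and columns indexed by ℤ/nℤ, with C(i,j) = 1 if j = i+1 and C(i,j) = 0 otherwise (the cyclic shift matrix, the image ρ(ζ) of the rotation braid ζ). Then for every k ∈ ℤ/nℤ, one has C · B_k = B_{k−1} · C and C · T_k = T_{k−1} · C; equivalently, conjugation by C shifts the index of the generator matrices. -/
/-- The cyclic shift permutation matrix `ρ(ζ)`: `C i j = 1` iff `j = i + 1`. -/
def Cmat (n : ℕ) (R : Type*) [CommRing R] : Matrix (ZMod n) (ZMod n) R :=
  fun i j => if j = i + 1 then 1 else 0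

/-!
Left multiplication by `C` shifts rows up by one and right multiplication shifts columns
right by one, so `C * M = M' * C` amounts to `M (i + 1) (j + 1) = M' i j`. The generator
matrices are translation invariant in exactly this sense, with `M = B_k` and `M' = B_{k-1}`.
-/

section

variable {n : ℕ} {R : Type*} [CommRing R]

theorem Cmat_mul_apply [NeZero n] (M : Matrix (ZMod n) (ZMod n) R) (i j : ZMod n) :
    (Cmat n R * M) i j = M (i + 1) j := by
  simp [Matrix.mul_apply, Cmat]

theorem mul_Cmat_apply [NeZero n] (M : Matrix (ZMod n) (ZMod n) R) (i j : ZMod n) :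
    (M * Cmat n R) i j = M i (j - 1) := by
  simp [Matrix.mul_apply, Cmat, ← sub_eq_iff_eq_add]

theorem Cmat_mul_eq_mul_Cmat_of_apply_add_one [NeZero n] {M M' : Matrix (ZMod n) (ZMod n) R}
    (h : ∀ i j, M (i + 1) (j + 1) = M' i j) : Cmat n R * M = M' * Cmat n R := by
  ext i j
  rw [Cmat_mul_apply, mul_Cmat_apply, ← h, sub_add_cancel]

theorem Bmat_add_one_apply_add_one (t : Rˣ) (k i j : ZMod n) :
    Bmat n R t (k + 1) (i + 1) (j + 1) = Bmat n R t k i j := by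
  simp only [Bmat, add_left_inj]

theorem Tmat_add_one_apply_add_one (s : Rˣ) (k i j : ZMod n) :
    Tmat n R s (k + 1) (i + 1) (j + 1) = Tmat n R s k i j := by
  simp only [Tmat, add_left_inj]

end

theorem stmt_9_general (n : ℕ) [NeZero n] (R : Type*) [CommRing R] (t s : Rˣ)
    (k : ZMod n) :
    Cmat n R * Bmat n R t k = Bmat n R t (k - 1) * Cmat n R ∧
    Cmat n R * Tmat n R s k = Tmat n R s (k - 1) * Cmat n R := by
  constructor <;> apply Cmat_mul_eq_mul_Cmat_of_apply_add_one <;> intro i j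
  · rw [← Bmat_add_one_apply_add_one t (k - 1), sub_add_cancel]
  · rw [← Tmat_add_one_apply_add_one s (k - 1), sub_add_cancel]

theorem stmt_9 (n : ℕ) [NeZero n] (hn : 2 ≤ n) (R : Type*) [CommRing R] (t s : Rˣ)
    (k : ZMod n) :
    Cmat n R * Bmat n R t k = Bmat n R t (k - 1) * Cmat n R ∧
    Cmat n R * Tmat n R s k = Tmat n R s (k - 1) * Cmat n R :=
  stmt_9_general n R t s k
end

section
/- For every i with 0 ≤ i ≤ n−3, the matrices S_i satisfy the braid relation S_i · S_{i+1} · S_i = S_{i+1} · S_i · S_{i+1}. -/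
/-!
Left multiplication by `Smat n R t i` is the row operation replacing rows `i, i + 1` of a
matrix by `(1 - t) • row i + t • row (i + 1)` and `row i`. The braid relation therefore only
involves rows `i, i + 1, i + 2`, where both sides are the same linear combinations of them.
-/

/-- The matrix `ρ̃(σ_i)`: agrees with the identity outside rows/columns `i, i+1`,
with block `[[1-t, t],[1, 0]]` in rows/columns `i, i+1` (indices in `Fin n`). -/
def Smat (n : ℕ) (R : Type*) [CommRing R] (t : Rˣ) (i : ℕ) :
    Matrix (Fin n) (Fin n) R := fun a b =>
  if a.val = i ∧ b.val = i then 1 - (t : R)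
  else if a.val = i ∧ b.val = i + 1 then (t : R)
  else if a.val = i + 1 ∧ b.val = i then 1
  else if a.val = i + 1 ∧ b.val = i + 1 then 0
  else if a = b then 1 else 0

/-- The matrix `ρ̃(π_i)`: agrees with the identity outside rows/columns `i, i+1`,
with block `[[0, s],[s⁻¹, 0]]` in rows/columns `i, i+1` (indices in `Fin n`). -/
def Pmat (n : ℕ) (R : Type*) [CommRing R] (s : Rˣ) (i : ℕ) :
    Matrix (Fin n) (Fin n) R := fun a b =>
  if a.val = i ∧ b.val = i then 0
  else if a.val = i ∧ b.val = i + 1 then (s : R)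
  else if a.val = i + 1 ∧ b.val = i then ((s⁻¹ : Rˣ) : R)
  else if a.val = i + 1 ∧ b.val = i + 1 then 0
  else if a = b then 1 else 0

/-- The matrix `ρ̃(τ_i)`: agrees with the identity outside rows/columns `i, i+1`,
with block `[[0, r],[r⁻¹, 0]]` in rows/columns `i, i+1` (indices in `Fin n`). -/
def Vmat (n : ℕ) (R : Type*) [CommRing R] (r : Rˣ) (i : ℕ) :
    Matrix (Fin n) (Fin n) R := fun a b =>
  if a.val = i ∧ b.val = i then 0
  else if a.val = i ∧ b.val = i + 1 then (r : R)
  else if a.val = i + 1 ∧ b.val = i then ((r⁻¹ : Rˣ) : R)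
  else if a.val = i + 1 ∧ b.val = i + 1 then 0
  else if a = b then 1 else 0

section
variable {n : ℕ} {R : Type*} [CommRing R] (t : Rˣ)

theorem Smat_row {i : ℕ} (hi : i + 1 < n) (a : Fin n) :
    Smat n R t i a =
      if a.val = i then
        (1 - (t : R)) • Pi.single ⟨i, by omega⟩ 1 + (t : R) • Pi.single ⟨i + 1, hi⟩ 1
      else if a.val = i + 1 then Pi.single ⟨i, by omega⟩ 1
      else Pi.single a 1 := by
  funext b
  simp only [Smat, ite_apply, Pi.add_apply, Pi.smul_apply, Pi.single_apply, Fin.ext_iff,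
    smul_eq_mul]
  split_ifs <;> first | omega | ring

theorem Smat_mul_row {i : ℕ} (hi : i + 1 < n) (M : Matrix (Fin n) (Fin n) R) (a : Fin n) :
    (Smat n R t i * M) a =
      if a.val = i then (1 - (t : R)) • M ⟨i, by omega⟩ + (t : R) • M ⟨i + 1, hi⟩
      else if a.val = i + 1 then M ⟨i, by omega⟩
      else M a := by
  rw [Matrix.mul_apply_eq_vecMul, Smat_row t hi]
  split_ifs <;>
    simp only [Matrix.add_vecMul, Matrix.smul_vecMul, Matrix.single_one_vecMul, Matrix.row]

theorem Smat_braid_mul {i : ℕ} (hi : i + 2 < n) (M : Matrix (Fin n) (Fin n) R) :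
    Smat n R t i * (Smat n R t (i + 1) * (Smat n R t i * M)) =
      Smat n R t (i + 1) * (Smat n R t i * (Smat n R t (i + 1) * M)) := by
  funext ⟨a, ha⟩
  have h₀₁ : i ≠ i + 1 := by omega
  have h₀₂ : i ≠ i + 1 + 1 := by omega
  have h₁₀ : i + 1 ≠ i := by omega
  have h₂₀ : i + 1 + 1 ≠ i := by omega
  have h₂₁ : i + 1 + 1 ≠ i + 1 := by omega
  simp only [Smat_mul_row t (by omega : i + 1 < n), Smat_mul_row t hi]
  obtain rfl | rfl | rfl | ⟨ha₀, ha₁, ha₂⟩ :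
      a = i ∨ a = i + 1 ∨ a = i + 1 + 1 ∨ (a ≠ i ∧ a ≠ i + 1 ∧ a ≠ i + 1 + 1) := by omega
  · simp only [h₀₁, h₀₂, h₁₀, h₂₀, h₂₁, ↓reduceIte]
    module
  · simp only [h₀₁, h₀₂, h₁₀, h₂₀, h₂₁, ↓reduceIte]
  · simp only [h₀₁, h₀₂, h₁₀, h₂₀, h₂₁, ↓reduceIte]
  · simp only [ha₀, ha₁, ha₂, ↓reduceIte]

end

theorem stmt_10_general (n : ℕ) (hn : 3 ≤ n) (R : Type*) [CommRing R] (t : Rˣ)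
    (i : ℕ) (hi : i ≤ n - 3) :
    Smat n R t i * Smat n R t (i + 1) * Smat n R t i =
      Smat n R t (i + 1) * Smat n R t i * Smat n R t (i + 1) := by
  simpa only [mul_assoc, mul_one] using Smat_braid_mul t (by omega : i + 2 < n) 1

theorem stmt_10 (n : ℕ) (hn : 3 ≤ n) (R : Type*) [CommRing R] (t s r : Rˣ)
    (i : ℕ) (hi : i ≤ n - 3) :
    Smat n R t i * Smat n R t (i + 1) * Smat n R t i =
      Smat n R t (i + 1) * Smat n R t i * Smat n R t (i + 1) :=
  stmt_10_general n hn R t i hi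
end

section
/- For all i, j with 0 ≤ i, j ≤ n−2 and |i − j| = 1, the mixed relations V_i · V_j · S_i = S_j · V_i · V_j and V_i · V_j · P_i = P_j · V_i · V_j hold. -/
/-! The product `M = V_k V_{k+1}` is a monomial matrix with `M e_k = r⁻¹ e_{k+1}`,
`M e_{k+1} = r⁻¹ e_{k+2}` and `M e_{k+2} = r² e_k`, fixing all other basis vectors. It maps the
coordinate plane of `e_k, e_{k+1}` onto that of `e_{k+1}, e_{k+2}` by the scalar `r⁻¹`, so
conjugation by `M` moves any matrix with a single `2 × 2` block at `k` to the same block at `k + 1`.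
The case `i = j + 1` follows from the case `j = i + 1` because each `V_k` is an involution. -/

def blockMat (n : ℕ) (R : Type*) [CommRing R] (x₁₁ x₁₂ x₂₁ x₂₂ : R) (k : ℕ) :
    Matrix (Fin n) (Fin n) R := fun a b =>
  if a.val = k ∧ b.val = k then x₁₁
  else if a.val = k ∧ b.val = k + 1 then x₁₂
  else if a.val = k + 1 ∧ b.val = k then x₂₁
  else if a.val = k + 1 ∧ b.val = k + 1 then x₂₂
  else if a = b then 1 else 0

section

variable {n : ℕ} {R : Type*} [CommRing R] {k : ℕ} {x₁₁ x₁₂ x₂₁ x₂₂ : R}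

theorem blockMat_apply_of_ne {a c : Fin n} (hac : a ≠ c)
    (h : (a.val ≠ k ∧ a.val ≠ k + 1) ∨ (c.val ≠ k ∧ c.val ≠ k + 1)) :
    blockMat n R x₁₁ x₁₂ x₂₁ x₂₂ k a c = 0 := by
  have : a.val ≠ c.val := Fin.val_ne_of_ne hac
  simp only [blockMat, hac, if_false]
  split_ifs <;> first | rfl | omega

variable (hk : k + 1 < n) {M : Matrix (Fin n) (Fin n) R}
include hk

theorem blockMat_mul_apply (a b : Fin n) :
    (blockMat n R x₁₁ x₁₂ x₂₁ x₂₂ k * M) a b =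
      if a.val = k then x₁₁ * M ⟨k, by omega⟩ b + x₁₂ * M ⟨k + 1, hk⟩ b
      else if a.val = k + 1 then x₂₁ * M ⟨k, by omega⟩ b + x₂₂ * M ⟨k + 1, hk⟩ b
      else M a b := by
  have hne : (⟨k, by omega⟩ : Fin n) ≠ ⟨k + 1, hk⟩ := by simp
  rw [Matrix.mul_apply]
  split_ifs with ha ha'
  · rw [Fintype.sum_eq_add _ _ hne fun c hc => ?_]
    · simp [blockMat, ha]
    · simp only [ne_eq, Fin.ext_iff] at hc
      rw [blockMat_apply_of_ne (by rw [Ne, Fin.ext_iff]; omega) (by omega), zero_mul]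
  · rw [Fintype.sum_eq_add _ _ hne fun c hc => ?_]
    · simp [blockMat, ha']
    · simp only [ne_eq, Fin.ext_iff] at hc
      rw [blockMat_apply_of_ne (by rw [Ne, Fin.ext_iff]; omega) (by omega), zero_mul]
  · rw [Fintype.sum_eq_single a fun c hc => ?_]
    · simp [blockMat, ha, ha']
    · rw [blockMat_apply_of_ne (Ne.symm hc) (Or.inl ⟨ha, ha'⟩), zero_mul]

theorem mul_blockMat_apply (a b : Fin n) :
    (M * blockMat n R x₁₁ x₁₂ x₂₁ x₂₂ k) a b =
      if b.val = k then M a ⟨k, by omega⟩ * x₁₁ + M a ⟨k + 1, hk⟩ * x₂₁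
      else if b.val = k + 1 then M a ⟨k, by omega⟩ * x₁₂ + M a ⟨k + 1, hk⟩ * x₂₂
      else M a b := by
  have hne : (⟨k, by omega⟩ : Fin n) ≠ ⟨k + 1, hk⟩ := by simp
  rw [Matrix.mul_apply]
  split_ifs with hb hb'
  · rw [Fintype.sum_eq_add _ _ hne fun c hc => ?_]
    · simp [blockMat, hb]
    · simp only [ne_eq, Fin.ext_iff] at hc
      rw [blockMat_apply_of_ne (by rw [Ne, Fin.ext_iff]; omega) (by omega), mul_zero]
  · rw [Fintype.sum_eq_add _ _ hne fun c hc => ?_]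
    · simp [blockMat, hb']
    · simp only [ne_eq, Fin.ext_iff] at hc
      rw [blockMat_apply_of_ne (by rw [Ne, Fin.ext_iff]; omega) (by omega), mul_zero]
  · rw [Fintype.sum_eq_single b fun c hc => ?_]
    · simp [blockMat, hb, hb']
    · rw [blockMat_apply_of_ne hc (Or.inr ⟨hb, hb'⟩), mul_zero]

end

section

variable {n : ℕ} {R : Type*} [CommRing R]

theorem Smat_eq_blockMat (t : Rˣ) (k : ℕ) :
    Smat n R t k = blockMat n R (1 - t) t 1 0 k := rfl

theorem Pmat_eq_blockMat (s : Rˣ) (k : ℕ) :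
    Pmat n R s k = blockMat n R 0 s ↑s⁻¹ 0 k := rfl

theorem Vmat_eq_blockMat (r : Rˣ) (k : ℕ) :
    Vmat n R r k = blockMat n R 0 r ↑r⁻¹ 0 k := rfl

theorem Vmat_mul_self {k : ℕ} (hk : k + 1 < n) (r : Rˣ) :
    Vmat n R r k * Vmat n R r k = 1 := by
  ext a b
  rw [Vmat_eq_blockMat, blockMat_mul_apply hk]
  simp only [blockMat, Matrix.one_apply, Fin.ext_iff, true_and]
  split_ifs <;> first | omega | simp

theorem Vmat_mul_Vmat_succ_mul_blockMat {k : ℕ} (hk : k + 2 < n) (r : Rˣ)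
    (x₁₁ x₁₂ x₂₁ x₂₂ : R) :
    Vmat n R r k * Vmat n R r (k + 1) * blockMat n R x₁₁ x₁₂ x₂₁ x₂₂ k =
      blockMat n R x₁₁ x₁₂ x₂₁ x₂₂ (k + 1) * Vmat n R r k * Vmat n R r (k + 1) := by
  have hk' : k + 1 < n := by omega
  ext a b
  rw [Matrix.mul_assoc]
  simp only [Vmat_eq_blockMat, blockMat_mul_apply hk', blockMat_mul_apply hk,
    mul_blockMat_apply hk]
  obtain ha | ha | ha | ⟨ha₀, ha₁, ha₂⟩ :
      a.val = k ∨ a.val = k + 1 ∨ a.val = k + 2 ∨ (a.val ≠ k ∧ a.val ≠ k + 1 ∧ a.val ≠ k + 2) := by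
    omega
  all_goals
    obtain hb | hb | hb | ⟨hb₀, hb₁, hb₂⟩ :
        b.val = k ∨ b.val = k + 1 ∨ b.val = k + 2 ∨ (b.val ≠ k ∧ b.val ≠ k + 1 ∧ b.val ≠ k + 2) := by
      omega
  all_goals simp [blockMat, Fin.ext_iff, add_assoc, *]
  all_goals (try split_ifs) <;> first | ring1 | omega

theorem Vmat_succ_mul_Vmat_mul_blockMat_succ {k : ℕ} (hk : k + 2 < n) (r : Rˣ)
    (x₁₁ x₁₂ x₂₁ x₂₂ : R) :
    Vmat n R r (k + 1) * Vmat n R r k * blockMat n R x₁₁ x₁₂ x₂₁ x₂₂ (k + 1) =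
      blockMat n R x₁₁ x₁₂ x₂₁ x₂₂ k * Vmat n R r (k + 1) * Vmat n R r k := by
  set V₀ := Vmat n R r k
  set V₁ := Vmat n R r (k + 1)
  have h₀ : V₀ * V₀ = 1 := Vmat_mul_self (by omega) r
  have h₁ : V₁ * V₁ = 1 := Vmat_mul_self hk r
  calc V₁ * V₀ * blockMat n R x₁₁ x₁₂ x₂₁ x₂₂ (k + 1)
      = V₁ * V₀ * (blockMat n R x₁₁ x₁₂ x₂₁ x₂₂ (k + 1) * V₀ * V₁) * (V₁ * V₀) := by
        simp only [Matrix.mul_assoc, ← Matrix.mul_assoc V₁ V₁, h₁, Matrix.one_mul, h₀,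
          Matrix.mul_one]
    _ = V₁ * V₀ * (V₀ * V₁ * blockMat n R x₁₁ x₁₂ x₂₁ x₂₂ k) * (V₁ * V₀) := by
        rw [Vmat_mul_Vmat_succ_mul_blockMat hk]
    _ = blockMat n R x₁₁ x₁₂ x₂₁ x₂₂ k * V₁ * V₀ := by
        simp only [Matrix.mul_assoc, ← Matrix.mul_assoc V₀ V₀, h₀, Matrix.one_mul,
          ← Matrix.mul_assoc V₁ V₁, h₁]

end

theorem stmt_15_general (n : ℕ) (R : Type*) [CommRing R] (t s r : Rˣ)
    (i j : ℕ) (hi : i ≤ n - 2) (hj : j ≤ n - 2) (hij : |(i : ℤ) - (j : ℤ)| = 1) :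
    Vmat n R r i * Vmat n R r j * Smat n R t i =
      Smat n R t j * Vmat n R r i * Vmat n R r j ∧
    Vmat n R r i * Vmat n R r j * Pmat n R s i =
      Pmat n R s j * Vmat n R r i * Vmat n R r j := by
  simp only [Smat_eq_blockMat, Pmat_eq_blockMat]
  obtain rfl | rfl : j = i + 1 ∨ i = j + 1 := by
    rcases abs_eq zero_le_one |>.mp hij with h | h <;> omega
  · exact ⟨Vmat_mul_Vmat_succ_mul_blockMat (by omega) r _ _ _ _,
      Vmat_mul_Vmat_succ_mul_blockMat (by omega) r _ _ _ _⟩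
  · exact ⟨Vmat_succ_mul_Vmat_mul_blockMat_succ (by omega) r _ _ _ _,
      Vmat_succ_mul_Vmat_mul_blockMat_succ (by omega) r _ _ _ _⟩

theorem stmt_15 (n : ℕ) (hn : 3 ≤ n) (R : Type*) [CommRing R] (t s r : Rˣ)
    (i j : ℕ) (hi : i ≤ n - 2) (hj : j ≤ n - 2) (hij : |(i : ℤ) - (j : ℤ)| = 1) :
    Vmat n R r i * Vmat n R r j * Smat n R t i =
      Smat n R t j * Vmat n R r i * Vmat n R r j ∧
    Vmat n R r i * Vmat n R r j * Pmat n R s i =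
      Pmat n R s j * Vmat n R r i * Vmat n R r j :=
  stmt_15_general n R t s r i j hi hj hij
end

section
/- (Proposition 5.) There exists a group homomorphism ρ̃ from the presented group FVB_n to the group of invertible n×n matrices over R sending, for each i with 0 ≤ i ≤ n−2, the generator σ_i to S_i, the generator π_i to P_i, and the generator τ_i to V_i. -/
/-- The generators `σ_i, π_i, τ_i` (`0 ≤ i ≤ n - 2`) of the flat-virtual braid group. -/
inductive FVBGen (n : ℕ) : Type
  | sigma : Fin (n - 1) → FVBGen n
  | pi : Fin (n - 1) → FVBGen n
  | tau : Fin (n - 1) → FVBGen n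

/-- The relations of the flat-virtual braid group `FVB_n`:
`x_i y_j = y_j x_i` for `|i - j| > 1` and `x, y ∈ {σ, π, τ}`;
`x_i x_{i+1} x_i = x_{i+1} x_i x_{i+1}` for `x ∈ {σ, τ}`;
`π_i² = τ_i² = 1`;
`x_i x_j y_i = y_j x_i x_j` for `|i - j| = 1`, `x ∈ {π, τ}`, `y ∈ {σ, π}`. -/
def FVBRels (n : ℕ) : Set (FreeGroup (FVBGen n)) :=
  let σ : Fin (n - 1) → FreeGroup (FVBGen n) := fun i => FreeGroup.of (FVBGen.sigma i)
  let π : Fin (n - 1) → FreeGroup (FVBGen n) := fun i => FreeGroup.of (FVBGen.pi i)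
  let τ : Fin (n - 1) → FreeGroup (FVBGen n) := fun i => FreeGroup.of (FVBGen.tau i)
  { w | (∃ i j : Fin (n - 1), |((i : ℕ) : ℤ) - ((j : ℕ) : ℤ)| > 1 ∧
          ∃ x y : Fin (n - 1) → FreeGroup (FVBGen n),
            (x = σ ∨ x = π ∨ x = τ) ∧ (y = σ ∨ y = π ∨ y = τ) ∧
            w = x i * y j * (x i)⁻¹ * (y j)⁻¹) ∨
        (∃ i j : Fin (n - 1), (j : ℕ) = (i : ℕ) + 1 ∧
          ∃ x : Fin (n - 1) → FreeGroup (FVBGen n), (x = σ ∨ x = τ) ∧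
            w = x i * x j * x i * (x j * x i * x j)⁻¹) ∨
        (∃ i : Fin (n - 1), w = π i * π i ∨ w = τ i * τ i) ∨
        (∃ i j : Fin (n - 1), |((i : ℕ) : ℤ) - ((j : ℕ) : ℤ)| = 1 ∧
          ∃ x y : Fin (n - 1) → FreeGroup (FVBGen n),
            (x = π ∨ x = τ) ∧ (y = σ ∨ y = π) ∧
            w = x i * x j * y i * (y j * x i * x j)⁻¹) }

/-!
Each generator acts by a `2 × 2` block on the coordinates `i, i + 1` and by the identity
elsewhere. Placing a square matrix on the coordinates `range e` of an embedding `e : ι ↪ κ`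
is a monoid homomorphism, it is compatible with composing embeddings, and two such
placements with disjoint supports commute. Hence the far commutation relations are automatic,
`π_i² = τ_i² = 1` already holds for the `2 × 2` blocks, and every relation between the indices
`i` and `i + 1` is the image, under the placement of `Fin 3` at `i`, of an identity between
`3 × 3` matrices, which is checked by direct computation.
-/

namespace Function.Embedding

variable {ι κ : Type*}

open Classical in
noncomputable def sumComplRangeEquiv (e : ι ↪ κ) : ι ⊕ ↥(Set.range e)ᶜ ≃ κ :=
  ((Equiv.ofInjective e e.injective).sumCongr (Equiv.refl _)).trans (Equiv.Set.sumCompl _)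

@[simp]
theorem sumComplRangeEquiv_symm_apply_apply (e : ι ↪ κ) (c : ι) :
    e.sumComplRangeEquiv.symm (e c) = Sum.inl c := by
  rw [Equiv.symm_apply_eq]
  simp [sumComplRangeEquiv]

theorem sumComplRangeEquiv_symm_apply_of_notMem {e : ι ↪ κ} {a : κ} (ha : a ∉ Set.range e) :
    e.sumComplRangeEquiv.symm a = Sum.inr ⟨a, ha⟩ := by
  rw [Equiv.symm_apply_eq]
  simp [sumComplRangeEquiv]

end Function.Embedding

namespace Matrix

open Function.Embedding

variable {ι ι' κ R : Type*} [Fintype ι] [Fintype ι'] [Fintype κ]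
  [DecidableEq ι] [DecidableEq ι'] [DecidableEq κ] [Semiring R]

noncomputable def blockEmbed (e : ι ↪ κ) : Matrix ι ι R →* Matrix κ κ R where
  toFun M := reindex e.sumComplRangeEquiv e.sumComplRangeEquiv (fromBlocks M 0 0 1)
  map_one' := by rw [fromBlocks_one, reindex_apply, submatrix_one_equiv]
  map_mul' M N := by
    rw [reindex_apply, reindex_apply, reindex_apply, submatrix_mul_equiv, fromBlocks_multiply]
    simp

@[simp]
theorem blockEmbed_apply_apply (e : ι ↪ κ) (M : Matrix ι ι R) (c d : ι) :
    blockEmbed e M (e c) (e d) = M c d := by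
  simp [blockEmbed]

theorem blockEmbed_apply_of_notMem {e : ι ↪ κ} (M : Matrix ι ι R) {a b : κ}
    (h : a ∉ Set.range e ∨ b ∉ Set.range e) : blockEmbed e M a b = (1 : Matrix κ κ R) a b := by
  by_cases ha : a ∈ Set.range e <;> by_cases hb : b ∈ Set.range e
  · tauto
  · obtain ⟨c, rfl⟩ := ha
    have hne : e c ≠ b := fun h => hb ⟨c, h⟩
    simp [blockEmbed, sumComplRangeEquiv_symm_apply_of_notMem hb, one_apply_ne hne]
  · obtain ⟨d, rfl⟩ := hb
    have hne : a ≠ e d := fun h => ha ⟨d, h.symm⟩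
    simp [blockEmbed, sumComplRangeEquiv_symm_apply_of_notMem ha, one_apply_ne hne]
  · simp [blockEmbed, sumComplRangeEquiv_symm_apply_of_notMem ha,
      sumComplRangeEquiv_symm_apply_of_notMem hb, one_apply]

theorem eq_blockEmbed_of_apply {e : ι ↪ κ} {M : Matrix ι ι R} {X : Matrix κ κ R}
    (hin : ∀ c d, X (e c) (e d) = M c d)
    (hout : ∀ a b, a ∉ Set.range e ∨ b ∉ Set.range e → X a b = (1 : Matrix κ κ R) a b) :
    X = blockEmbed e M := by
  ext a b
  by_cases h : a ∈ Set.range e ∧ b ∈ Set.range e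
  · obtain ⟨⟨c, rfl⟩, ⟨d, rfl⟩⟩ := h
    rw [hin, blockEmbed_apply_apply]
  · rw [not_and_or] at h
    rw [hout a b h, blockEmbed_apply_of_notMem M h]

theorem blockEmbed_blockEmbed (f : ι ↪ ι') (e : ι' ↪ κ) (M : Matrix ι ι R) :
    blockEmbed e (blockEmbed f M) = blockEmbed (f.trans e) M := by
  refine eq_blockEmbed_of_apply (by simp) fun a b h => ?_
  by_cases hab : a ∈ Set.range e ∧ b ∈ Set.range e
  · obtain ⟨⟨c, rfl⟩, ⟨d, rfl⟩⟩ := hab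
    have hcd : c ∉ Set.range f ∨ d ∉ Set.range f := by
      simpa [Set.range_comp] using h
    rw [blockEmbed_apply_apply, blockEmbed_apply_of_notMem M hcd]
    simp [one_apply, e.injective.eq_iff]
  · exact blockEmbed_apply_of_notMem _ (not_and_or.mp hab)

theorem blockEmbed_inl (M : Matrix ι ι R) :
    blockEmbed (inl : ι ↪ ι ⊕ ι') M = fromBlocks M 0 0 1 := by
  refine (eq_blockEmbed_of_apply (by simp) fun a b h => ?_).symm
  rcases a with a | a <;> rcases b with b | b <;> simp_all [one_apply]

theorem blockEmbed_inr (M : Matrix ι' ι' R) :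
    blockEmbed (inr : ι' ↪ ι ⊕ ι') M = fromBlocks 1 0 0 M := by
  refine (eq_blockEmbed_of_apply (by simp) fun a b h => ?_).symm
  rcases a with a | a <;> rcases b with b | b <;> simp_all [one_apply]

theorem commute_blockEmbed {e : ι ↪ κ} {f : ι' ↪ κ} (h : Disjoint (Set.range e) (Set.range f))
    (M : Matrix ι ι R) (N : Matrix ι' ι' R) : Commute (blockEmbed e M) (blockEmbed f N) := by
  let g : ι ⊕ ι' ↪ κ := ⟨Sum.elim e f, e.injective.sumElim f.injective
    fun c d hcd => Set.disjoint_left.mp h ⟨c, rfl⟩ ⟨d, hcd.symm⟩⟩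
  have he : e = inl.trans g := rfl
  have hf : f = inr.trans g := rfl
  rw [he, hf, ← blockEmbed_blockEmbed, ← blockEmbed_blockEmbed, blockEmbed_inl, blockEmbed_inr]
  simp only [Commute, SemiconjBy, ← map_mul, fromBlocks_multiply]
  simp

end Matrix

open Matrix

namespace Fin

def offsetEmb {k n : ℕ} (i : ℕ) (h : i + k ≤ n) : Fin k ↪ Fin n :=
  (natAddEmb i).trans (castLEEmb h)

@[simp]
theorem val_offsetEmb {k n i : ℕ} (h : i + k ≤ n) (c : Fin k) : (offsetEmb i h c : ℕ) = i + c :=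
  rfl

theorem mem_range_offsetEmb {k n i : ℕ} (h : i + k ≤ n) (a : Fin n) :
    a ∈ Set.range (offsetEmb i h) ↔ i ≤ a ∧ a < i + k := by
  constructor
  · rintro ⟨c, rfl⟩
    simp
  · intro ha
    exact ⟨⟨a - i, by omega⟩, Fin.ext (by simp; omega)⟩

theorem offsetEmb_trans_offsetEmb {k l n i j : ℕ} (hj : j + l ≤ k) (hi : i + k ≤ n) :
    (offsetEmb j hj).trans (offsetEmb i hi) = offsetEmb (i + j) (by omega) := by
  ext c
  simp only [Function.Embedding.trans_apply, val_offsetEmb]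
  omega

theorem disjoint_range_offsetEmb {k l n i j : ℕ} (hi : i + k ≤ n) (hj : j + l ≤ n)
    (hij : i + k ≤ j ∨ j + l ≤ i) :
    Disjoint (Set.range (offsetEmb i hi)) (Set.range (offsetEmb j hj)) := by
  rw [Set.disjoint_left]
  intro a ha hb
  rw [mem_range_offsetEmb] at ha hb
  omega

end Fin

def pairEmb {n : ℕ} (i : Fin (n - 1)) : Fin 2 ↪ Fin n :=
  Fin.offsetEmb i (by omega)

local notation "P₀" => blockEmbed (pairEmb (0 : Fin (3 - 1)))
local notation "P₁" => blockEmbed (pairEmb (1 : Fin (3 - 1)))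

section PairBlocks

variable {R : Type*} [Semiring R] {n : ℕ}

theorem blockEmbed_offsetEmb_two_apply {i : ℕ} (h : i + 2 ≤ n)
    (M : Matrix (Fin 2) (Fin 2) R) (a b : Fin n) :
    blockEmbed (Fin.offsetEmb i h) M a b =
      if a.val = i ∧ b.val = i then M 0 0
      else if a.val = i ∧ b.val = i + 1 then M 0 1
      else if a.val = i + 1 ∧ b.val = i then M 1 0
      else if a.val = i + 1 ∧ b.val = i + 1 then M 1 1
      else if a = b then 1 else 0 := by
  by_cases hab : a ∈ Set.range (Fin.offsetEmb i h) ∧ b ∈ Set.range (Fin.offsetEmb i h)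
  · obtain ⟨⟨c, rfl⟩, ⟨d, rfl⟩⟩ := hab
    fin_cases c <;> fin_cases d <;> simp
  · rw [blockEmbed_apply_of_notMem M (not_and_or.mp hab), one_apply]
    simp only [Fin.mem_range_offsetEmb] at hab
    split_ifs <;> first | rfl | omega

theorem blockEmbed_pairEmb_zero (M : Matrix (Fin 2) (Fin 2) R) :
    P₀ M = !![M 0 0, M 0 1, 0; M 1 0, M 1 1, 0; 0, 0, 1] := by
  ext a b
  rw [pairEmb, blockEmbed_offsetEmb_two_apply]
  fin_cases a <;> fin_cases b <;> simp

theorem blockEmbed_pairEmb_one (M : Matrix (Fin 2) (Fin 2) R) :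
    P₁ M = !![1, 0, 0; 0, M 0 0, M 0 1; 0, M 1 0, M 1 1] := by
  ext a b
  rw [pairEmb, blockEmbed_offsetEmb_two_apply]
  fin_cases a <;> fin_cases b <;> simp

theorem blockEmbed_pairEmb_eq_of_val_eq {m : ℕ} (h : m + 3 ≤ n) {i : Fin (n - 1)}
    {a : Fin (3 - 1)} (hi : (i : ℕ) = m + a) (M : Matrix (Fin 2) (Fin 2) R) :
    blockEmbed (pairEmb i) M = blockEmbed (Fin.offsetEmb m h) (blockEmbed (pairEmb a) M) := by
  rw [blockEmbed_blockEmbed, pairEmb, pairEmb, Fin.offsetEmb_trans_offsetEmb]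
  simp only [hi]

theorem commute_blockEmbed_pairEmb {i j : Fin (n - 1)} (hij : 1 < |(i : ℤ) - j|)
    (X Y : Matrix (Fin 2) (Fin 2) R) :
    Commute (blockEmbed (pairEmb i) X) (blockEmbed (pairEmb j) Y) :=
  commute_blockEmbed
    (Fin.disjoint_range_offsetEmb _ _ (by rcases lt_abs.mp hij with h | h <;> omega)) X Y

theorem blockEmbed_pairEmb_mul_mul_eq {m : ℕ} (h : m + 3 ≤ n) {i j : Fin (n - 1)}
    {a b : Fin (3 - 1)} (hi : (i : ℕ) = m + a) (hj : (j : ℕ) = m + b)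
    {A B C D E F : Matrix (Fin 2) (Fin 2) R}
    (h₃ : blockEmbed (pairEmb a) A * blockEmbed (pairEmb b) B * blockEmbed (pairEmb a) C =
      blockEmbed (pairEmb b) D * blockEmbed (pairEmb a) E * blockEmbed (pairEmb b) F) :
    blockEmbed (pairEmb i) A * blockEmbed (pairEmb j) B * blockEmbed (pairEmb i) C =
      blockEmbed (pairEmb j) D * blockEmbed (pairEmb i) E * blockEmbed (pairEmb j) F := by
  simp only [blockEmbed_pairEmb_eq_of_val_eq h hi, blockEmbed_pairEmb_eq_of_val_eq h hj,
    ← map_mul, h₃]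

end PairBlocks

section ThreeByThree

variable {R : Type*} [CommRing R]

theorem braid_three_sigma (t : R) :
    P₀ !![1 - t, t; 1, 0] * P₁ !![1 - t, t; 1, 0] * P₀ !![1 - t, t; 1, 0] =
      P₁ !![1 - t, t; 1, 0] * P₀ !![1 - t, t; 1, 0] * P₁ !![1 - t, t; 1, 0] := by
  simp only [blockEmbed_pairEmb_zero, blockEmbed_pairEmb_one, mul_fin_three]
  simp
  constructor <;> ring

theorem braid_three_antidiag (a b : R) :
    P₀ !![0, a; b, 0] * P₁ !![0, a; b, 0] * P₀ !![0, a; b, 0] =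
      P₁ !![0, a; b, 0] * P₀ !![0, a; b, 0] * P₁ !![0, a; b, 0] := by
  simp only [blockEmbed_pairEmb_zero, blockEmbed_pairEmb_one, mul_fin_three]
  simp [mul_comm]

/- For `W = !![0, a; b, 0]`, `P₀ W * P₁ W` sends `e₀, e₁` to `b • e₁, b • e₂` and `P₁ W * P₀ W`
sends `e₁, e₂` to `a • e₀, a • e₁`, so conjugating by them moves an arbitrary block. -/

theorem mixed_three_zero_one (a b : R) (Y : Matrix (Fin 2) (Fin 2) R) :
    P₀ !![0, a; b, 0] * P₁ !![0, a; b, 0] * P₀ Y =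
      P₁ Y * P₀ !![0, a; b, 0] * P₁ !![0, a; b, 0] := by
  simp only [blockEmbed_pairEmb_zero, blockEmbed_pairEmb_one, mul_fin_three]
  simp [mul_comm]

theorem mixed_three_one_zero (a b : R) (Y : Matrix (Fin 2) (Fin 2) R) :
    P₁ !![0, a; b, 0] * P₀ !![0, a; b, 0] * P₁ Y =
      P₀ Y * P₁ !![0, a; b, 0] * P₀ !![0, a; b, 0] := by
  simp only [blockEmbed_pairEmb_zero, blockEmbed_pairEmb_one, mul_fin_three]
  simp [mul_comm]

end ThreeByThree

section Generators

def sigmaBlock {R : Type*} [Ring R] (t : Rˣ) : (Matrix (Fin 2) (Fin 2) R)ˣ where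
  val := !![1 - t, t; 1, 0]
  inv := !![0, 1; ↑t⁻¹, 1 - ↑t⁻¹]
  val_inv := by simp [one_fin_two, mul_sub]
  inv_val := by simp [one_fin_two, mul_sub]

def antidiagBlock {R : Type*} [Semiring R] (u : Rˣ) : (Matrix (Fin 2) (Fin 2) R)ˣ where
  val := !![0, u; ↑u⁻¹, 0]
  inv := !![0, u; ↑u⁻¹, 0]
  val_inv := by simp [one_fin_two]
  inv_val := by simp [one_fin_two]

theorem antidiagBlock_mul_self {R : Type*} [Semiring R] (u : Rˣ) :
    antidiagBlock (R := R) u * antidiagBlock u = 1 :=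
  Units.ext (antidiagBlock u).val_inv

variable {R : Type*} [CommRing R] {n : ℕ}

noncomputable def fvbImage (t s r : Rˣ) : FVBGen n → (Matrix (Fin n) (Fin n) R)ˣ
  | .sigma i => Units.map (blockEmbed (pairEmb i)) (sigmaBlock t)
  | .pi i => Units.map (blockEmbed (pairEmb i)) (antidiagBlock s)
  | .tau i => Units.map (blockEmbed (pairEmb i)) (antidiagBlock r)

theorem Smat_eq_blockEmbed (t : Rˣ) (i : Fin (n - 1)) :
    Smat n R t i = blockEmbed (pairEmb i) (sigmaBlock t : Matrix (Fin 2) (Fin 2) R) := by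
  ext a b
  rw [pairEmb, blockEmbed_offsetEmb_two_apply]
  simp [Smat, sigmaBlock]

theorem Pmat_eq_blockEmbed (s : Rˣ) (i : Fin (n - 1)) :
    Pmat n R s i = blockEmbed (pairEmb i) (antidiagBlock s : Matrix (Fin 2) (Fin 2) R) := by
  ext a b
  rw [pairEmb, blockEmbed_offsetEmb_two_apply]
  simp [Pmat, antidiagBlock]

theorem Vmat_eq_blockEmbed (r : Rˣ) (i : Fin (n - 1)) :
    Vmat n R r i = blockEmbed (pairEmb i) (antidiagBlock r : Matrix (Fin 2) (Fin 2) R) := by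
  ext a b
  rw [pairEmb, blockEmbed_offsetEmb_two_apply]
  simp [Vmat, antidiagBlock]

theorem lift_fvbImage_eq_one (t s r : Rˣ) :
    ∀ w ∈ FVBRels n, FreeGroup.lift (fvbImage (R := R) t s r) w = 1 := by
  intro w hw
  simp only [FVBRels, Set.mem_ofPred_eq] at hw
  rcases hw with ⟨i, j, hij, x, y, hx, hy, rfl⟩ | ⟨i, j, hij, x, hx, rfl⟩ | ⟨i, hw⟩ |
    ⟨i, j, hij, x, y, hx, hy, rfl⟩
  · rcases hx with rfl | rfl | rfl <;> rcases hy with rfl | rfl | rfl <;>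
      simp only [map_mul, map_inv, FreeGroup.lift_apply_of] <;>
      rw [mul_inv_eq_one, mul_inv_eq_iff_eq_mul, Units.ext_iff] <;>
      exact (commute_blockEmbed_pairEmb hij _ _).eq
  · have h : (i : ℕ) + 3 ≤ n := by omega
    rcases hx with rfl | rfl <;>
      simp only [map_mul, map_inv, FreeGroup.lift_apply_of, mul_inv_eq_one,
        Units.ext_iff, Units.val_mul, fvbImage, Units.coe_map]
    · exact blockEmbed_pairEmb_mul_mul_eq h (a := 0) (b := 1) (by simp) (by simp [hij])
        (braid_three_sigma _)
    · exact blockEmbed_pairEmb_mul_mul_eq h (a := 0) (b := 1) (by simp) (by simp [hij])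
        (braid_three_antidiag _ _)
  · rcases hw with rfl | rfl <;>
      rw [map_mul, FreeGroup.lift_apply_of, fvbImage, ← map_mul, antidiagBlock_mul_self, map_one]
  · rcases hx with rfl | rfl <;> rcases hy with rfl | rfl <;>
      simp only [map_mul, map_inv, FreeGroup.lift_apply_of, mul_inv_eq_one,
        Units.ext_iff, Units.val_mul, fvbImage, Units.coe_map] <;>
      rcases (abs_eq zero_le_one).mp hij with h | h
    all_goals first
      | exact blockEmbed_pairEmb_mul_mul_eq (m := j) (by omega) (a := 1) (b := 0)
          (by simp; omega) (by simp) (mixed_three_one_zero _ _ _)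
      | exact blockEmbed_pairEmb_mul_mul_eq (m := i) (by omega) (a := 0) (b := 1)
          (by simp) (by simp; omega) (mixed_three_zero_one _ _ _)

end Generators

theorem stmt_18_general (n : ℕ) (R : Type*) [CommRing R] (t s r : Rˣ) :
    ∃ ρ : PresentedGroup (FVBRels n) →* (Matrix (Fin n) (Fin n) R)ˣ,
      ∀ i : Fin (n - 1),
        ((ρ (PresentedGroup.of (FVBGen.sigma i)) : Matrix (Fin n) (Fin n) R)
            = Smat n R t (i : ℕ)) ∧
        ((ρ (PresentedGroup.of (FVBGen.pi i)) : Matrix (Fin n) (Fin n) R)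
            = Pmat n R s (i : ℕ)) ∧
        ((ρ (PresentedGroup.of (FVBGen.tau i)) : Matrix (Fin n) (Fin n) R)
            = Vmat n R r (i : ℕ)) := by
  refine ⟨PresentedGroup.toGroup (lift_fvbImage_eq_one t s r), fun i => ⟨?_, ?_, ?_⟩⟩ <;>
    simp only [PresentedGroup.toGroup.of, fvbImage, Units.coe_map]
  exacts [(Smat_eq_blockEmbed t i).symm, (Pmat_eq_blockEmbed s i).symm,
    (Vmat_eq_blockEmbed r i).symm]

theorem stmt_18 (n : ℕ) (hn : 3 ≤ n) (R : Type*) [CommRing R] (t s r : Rˣ) :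
    ∃ ρ : PresentedGroup (FVBRels n) →* (Matrix (Fin n) (Fin n) R)ˣ,
      ∀ i : Fin (n - 1),
        ((ρ (PresentedGroup.of (FVBGen.sigma i)) : Matrix (Fin n) (Fin n) R)
            = Smat n R t (i : ℕ)) ∧
        ((ρ (PresentedGroup.of (FVBGen.pi i)) : Matrix (Fin n) (Fin n) R)
            = Pmat n R s (i : ℕ)) ∧
        ((ρ (PresentedGroup.of (FVBGen.tau i)) : Matrix (Fin n) (Fin n) R)
            = Vmat n R r (i : ℕ)) :=
  stmt_18_general n R t s r
end
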